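/- For all real numbers z and θ, the series Σ_{k=0}^∞ J_{2k+1}(z) · sin((2k+1)θ) converges and sin(z · sin θ) = 2 · Σ_{k=0}^∞ J_{2k+1}(z) · sin((2k+1)θ). -/

import Mathlib

/-!
`φ ↦ sin (z sin φ)` is a smooth, odd, `2π`-periodic function, so its Fourier series is a sine
series, which converges everywhere because the Fourier coefficients of a `C¹` periodic function
are summable (integration by parts and Parseval). The reflection `φ ↦ π - φ` fixes `sin (z sin φ)`:
it kills the sine coefficients of even order, and for odd `m` it kills the `cos (mφ) cos (z sin φ)`
part of the integrand `cos (mφ - z sin φ)` of `J_m`, so that `2 J_m(z)` is the `m`-th sine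
coefficient.
-/

open Real MeasureTheory intervalIntegral

/-- The Bessel function of the first kind of integer order `m`,
`J_m(x) = (1/π) ∫₀^π cos(mθ - x sin θ) dθ`. -/
noncomputable def besselJ (m : ℤ) (x : ℝ) : ℝ :=
  (1 / Real.pi) * ∫ θ in (0:ℝ)..Real.pi, Real.cos (m * θ - x * Real.sin θ)

open Set Function Filter
open scoped Interval

namespace intervalIntegral

variable {E : Type*} [NormedAddCommGroup E] [NormedSpace ℝ E]

theorem integral_eq_zero_of_apply_add_sub_eq_neg {a b : ℝ} {h : ℝ → E}
    (hh : ∀ x, h (a + b - x) = -h x) : ∫ x in a..b, h x = 0 := by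
  have key := integral_comp_sub_left h (a + b) (a := a) (b := b)
  simp only [hh, integral_neg, add_sub_cancel_right, add_sub_cancel_left] at key
  rw [neg_eq_iff_add_eq_zero, ← two_smul ℝ, smul_eq_zero] at key
  exact key.resolve_left two_ne_zero

theorem integral_neg_self_eq_integral_add_comp_neg {a : ℝ} {h : ℝ → E} (hh : Continuous h) :
    ∫ x in -a..a, h x = ∫ x in 0..a, (h x + h (-x)) := by
  have hneg : Continuous fun x => h (-x) := hh.comp continuous_neg
  rw [integral_add (hh.intervalIntegrable _ _) (hneg.intervalIntegrable _ _), integral_comp_neg,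
    neg_zero, add_comm,
    integral_add_adjacent_intervals (hh.intervalIntegrable _ _) (hh.intervalIntegrable _ _)]

end intervalIntegral

theorem ContinuousOn.memLp_restrict_Ioc {E : Type*} [NormedAddCommGroup E] {f : ℝ → E} {a b : ℝ}
    (hf : ContinuousOn f (Icc a b)) (p : ENNReal) : MemLp f p (volume.restrict (Ioc a b)) := by
  obtain ⟨C, hC⟩ := isCompact_Icc.exists_bound_of_continuousOn hf
  refine .of_bound ((hf.mono Ioc_subset_Icc_self).aestronglyMeasurable measurableSet_Ioc) C ?_
  exact ae_restrict_of_forall_mem measurableSet_Ioc fun x hx => hC x (Ioc_subset_Icc_self hx)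

/-- Integrating by parts, the `n`-th coefficient of `f` is `(b - a) / (2π i n)` times that of `f'`;
then `|n|⁻¹ ‖c‖ ≤ (n⁻² + ‖c‖²) / 2`, and `∑ ‖c‖²` converges by Parseval's identity for `f'`. -/
theorem summable_fourierCoeffOn_of_hasDerivAt {a b : ℝ} (hab : a < b) {f f' : ℝ → ℂ}
    (hfab : f b = f a) (hf : ∀ x ∈ [[a, b]], HasDerivAt f (f' x) x)
    (hf' : MemLp f' 2 (volume.restrict (Ioc a b))) : Summable (fourierCoeffOn hab f) := by
  have hsq : Summable fun n => ‖fourierCoeffOn hab f' n‖ ^ 2 :=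
    (hasSum_sq_fourierCoeffOn hab hf').summable
  have hinv : Summable fun n : ℤ => 1 / (n : ℝ) ^ 2 :=
    Real.summable_one_div_int_pow.mpr one_lt_two
  have hint : IntervalIntegrable f' volume a b :=
    (intervalIntegrable_iff_integrableOn_Ioc_of_le hab.le).mpr (hf'.integrable one_le_two)
  refine .of_norm_bounded_eventually ((hinv.add hsq).mul_left ((b - a) / (4 * π))) ?_
  filter_upwards [eventually_cofinite_ne 0] with n hn
  rw [fourierCoeffOn_of_hasDerivAt hab hn hf hint, hfab, sub_self, mul_zero, zero_sub]
  have hamgm := two_mul_le_add_sq |(n : ℝ)|⁻¹ ‖fourierCoeffOn hab f' n‖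
  rw [inv_pow, sq_abs] at hamgm
  have hba : ‖(b : ℂ) - a‖ = b - a := by
    rw [← Complex.ofReal_sub, Complex.norm_real, Real.norm_of_nonneg (sub_nonneg.2 hab.le)]
  have hnorm : ‖1 / (-2 * π * Complex.I * n) * -((b - a) * fourierCoeffOn hab f' n)‖
      = (b - a) / (4 * π) * (2 * |(n : ℝ)|⁻¹ * ‖fourierCoeffOn hab f' n‖) := by
    simp [hba, abs_of_pos pi_pos]
    field_simp
    ring
  rw [hnorm, one_div]
  gcongr

theorem Function.Periodic.lift_eq_liftIco {B : Type*} {T : ℝ} [Fact (0 < T)] {f : ℝ → B}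
    (hf : Periodic f T) (a : ℝ) : hf.lift = AddCircle.liftIco T a f := by
  ext q
  obtain ⟨x, hx, rfl⟩ : q ∈ ((↑) : ℝ → AddCircle T) '' Ico a (a + T) := by
    rw [AddCircle.coe_image_Ico_eq]; trivial
  rw [Periodic.lift_coe, AddCircle.liftIco_coe_apply hx]

theorem Function.Periodic.hasSum_fourier_lift {T : ℝ} [hT : Fact (0 < T)] {f f' : ℝ → ℂ}
    (hf : Periodic f T) (hd : ∀ x, HasDerivAt f (f' x) x) (hf' : Continuous f') (x : ℝ) :
    HasSum (fun n => fourierCoeff hf.lift n • fourier n (x : AddCircle T)) (f x) := by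
  have hc : Continuous f := continuous_iff_continuousAt.2 fun x => (hd x).continuousAt
  let F : C(AddCircle T, ℂ) := ⟨hf.lift, continuous_coinduced_dom.mpr hc⟩
  have hab := lt_add_of_pos_right 0 hT.out
  have hF : Summable (fourierCoeff F) := by
    have := summable_fourierCoeffOn_of_hasDerivAt hab (by simpa using hf 0)
      (fun x _ => hd x) (hf'.continuousOn.memLp_restrict_Ioc 2)
    rwa [← funext (fourierCoeff_liftIco_eq f), ← hf.lift_eq_liftIco] at this
  exact has_pointwise_sum_fourier_series_of_summable hF x

noncomputable def sineCoeff (g : ℝ → ℝ) (ν : ℝ) : ℝ :=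
  2 / π * ∫ φ in 0..π, sin (ν * φ) * g φ

theorem sineCoeff_neg (g : ℝ → ℝ) (ν : ℝ) : sineCoeff g (-ν) = -sineCoeff g ν := by
  simp [sineCoeff, neg_mul, sin_neg, intervalIntegral.integral_neg]

theorem sineCoeff_zero (g : ℝ → ℝ) : sineCoeff g 0 = 0 := by
  simp [sineCoeff]

section SineSeries

local instance : Fact (0 < 2 * π) := ⟨two_pi_pos⟩

theorem fourier_coe_two_pi (n : ℤ) (x : ℝ) :
    fourier n (x : AddCircle (2 * π)) = Complex.exp (n * x * Complex.I) := by
  rw [fourier_coe_apply]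
  congr 1
  push_cast
  field_simp

theorem Function.Periodic.fourierCoeff_lift_ofReal_of_odd {g : ℝ → ℝ} (hper : Periodic g (2 * π))
    (hodd : Function.Odd g) (hg : Continuous g) (n : ℤ) :
    fourierCoeff (hper.comp ((↑) : ℝ → ℂ)).lift n = -(Complex.I / 2) * sineCoeff g n := by
  rw [fourierCoeff_eq_intervalIntegral _ n (-π), show -π + 2 * π = π by ring]
  simp only [Periodic.lift_coe, comp_apply, fourier_coe_two_pi, smul_eq_mul]
  rw [integral_neg_self_eq_integral_add_comp_neg (by fun_prop)]
  have hsym : ∀ x : ℝ, Complex.exp ((-n : ℤ) * x * Complex.I) * g x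
      + Complex.exp ((-n : ℤ) * (-x : ℝ) * Complex.I) * g (-x)
      = -2 * Complex.I * ((sin (n * x) * g x : ℝ) : ℂ) := by
    intro x
    rw [hodd, Complex.ofReal_mul, Complex.ofReal_sin, Complex.sin]
    push_cast
    ring_nf
    rw [Complex.I_sq]
    ring
  simp_rw [hsym]
  rw [intervalIntegral.integral_const_mul, intervalIntegral.integral_ofReal, sineCoeff,
    Complex.real_smul]
  push_cast
  field_simp

theorem Function.Periodic.hasSum_sineCoeff_mul_sin {g g' : ℝ → ℝ} (hper : Periodic g (2 * π))
    (hodd : Function.Odd g) (hd : ∀ x, HasDerivAt g (g' x) x) (hg' : Continuous g') (x : ℝ) :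
    HasSum (fun n : ℕ => sineCoeff g n * sin (n * x)) (g x) := by
  have hc : Continuous g := continuous_iff_continuousAt.2 fun x => (hd x).continuousAt
  have hF := ((hper.comp ((↑) : ℝ → ℂ)).hasSum_fourier_lift (fun x => (hd x).ofReal_comp)
    (Complex.continuous_ofReal.comp hg') x).nat_add_neg
  simp only [hper.fourierCoeff_lift_ofReal_of_odd hodd hc, fourier_coe_two_pi, Int.cast_neg,
    Int.cast_natCast, Int.cast_zero, sineCoeff_neg, sineCoeff_zero, smul_eq_mul] at hF
  refine Complex.hasSum_ofReal.mp ?_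
  convert hF using 1
  · ext n
    push_cast
    rw [Complex.sin]
    ring_nf
  · simp

end SineSeries

theorem sineCoeff_sin_mul_sin_two_mul (z : ℝ) (j : ℤ) :
    sineCoeff (fun φ => sin (z * sin φ)) (2 * j) = 0 := by
  rw [sineCoeff, integral_eq_zero_of_apply_add_sub_eq_neg, mul_zero]
  intro φ
  have hrefl : 2 * j * (0 + π - φ) = -(2 * j * φ) + j * (2 * π) := by ring
  rw [hrefl, sin_add_int_mul_two_pi, sin_neg, zero_add, sin_pi_sub, neg_mul]

theorem two_mul_besselJ_of_odd (z : ℝ) {m : ℤ} (hm : Odd m) :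
    2 * besselJ m z = sineCoeff (fun φ => sin (z * sin φ)) m := by
  have hcos : ∫ φ in 0..π, cos (m * φ) * cos (z * sin φ) = 0 := by
    refine integral_eq_zero_of_apply_add_sub_eq_neg fun φ => ?_
    obtain ⟨j, rfl⟩ := hm
    have hrefl : ((2 * j + 1 : ℤ) : ℝ) * (0 + π - φ) = π - (2 * j + 1 : ℤ) * φ + j * (2 * π) := by
      push_cast; ring
    rw [hrefl, cos_add_int_mul_two_pi, cos_pi_sub, zero_add, sin_pi_sub, neg_mul]
  simp only [besselJ, sineCoeff, cos_sub]
  rw [integral_add (Continuous.intervalIntegrable (by fun_prop) _ _)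
    (Continuous.intervalIntegrable (by fun_prop) _ _), hcos, zero_add]
  ring

theorem HasSum.comp_two_mul_add_one {M : Type*} [AddCommMonoid M] [TopologicalSpace M]
    {f : ℕ → M} {a : M} (hf : HasSum f a) (heven : ∀ k, f (2 * k) = 0) :
    HasSum (fun k => f (2 * k + 1)) a := by
  refine (Injective.hasSum_iff (g := fun k => 2 * k + 1) (fun _ _ h => by dsimp at h; omega)
    fun n hn => ?_).mpr hf
  obtain ⟨k, rfl | rfl⟩ := Nat.even_or_odd' n
  · exact heven k
  · exact absurd ⟨k, rfl⟩ hn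

/-- The Jacobi–Anger-type expansion: for all real `z` and `θ`, the series
`Σ_{k=0}^∞ J_{2k+1}(z) sin((2k+1)θ)` converges and
`sin(z sin θ) = 2 Σ_{k=0}^∞ J_{2k+1}(z) sin((2k+1)θ)`. -/
theorem sin_sin_eq_tsum_besselJ (z θ : ℝ) :
    HasSum (fun k : ℕ => besselJ (2 * (k : ℤ) + 1) z * Real.sin ((2 * (k : ℝ) + 1) * θ))
      (Real.sin (z * Real.sin θ) / 2) := by
  have hper : Periodic (fun φ => sin (z * sin φ)) (2 * π) := fun φ => by simp
  have hodd : Function.Odd fun φ => sin (z * sin φ) := fun φ => by simp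
  have hd (φ : ℝ) : HasDerivAt (fun φ => sin (z * sin φ)) (cos (z * sin φ) * (z * cos φ)) φ :=
    ((hasDerivAt_sin φ).const_mul z).sin
  have hodd_terms := (hper.hasSum_sineCoeff_mul_sin hodd hd (by fun_prop) θ).comp_two_mul_add_one
    fun k => by
      rw [Nat.cast_mul, Nat.cast_two, ← Int.cast_natCast, sineCoeff_sin_mul_sin_two_mul, zero_mul]
  have hterm (k : ℕ) : besselJ (2 * (k : ℤ) + 1) z * sin ((2 * (k : ℝ) + 1) * θ)
      = sineCoeff (fun φ => sin (z * sin φ)) (2 * k + 1 : ℕ) * sin ((2 * k + 1 : ℕ) * θ) / 2 := by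
    have hJ := two_mul_besselJ_of_odd z (odd_two_mul_add_one (k : ℤ))
    push_cast at hJ ⊢
    rw [← hJ]
    ring
  simpa only [hterm] using hodd_terms.div_const 2
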